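/- arXiv:2106.15949 — 3 statements merged into one kernel-verified Lean document; each statement's English description precedes it below -/
import Mathlib

section
/- Let 1/2 ≤ α < 1, let Σ be a subset of the strip α < Re z < 1 having no accumulation points at finite distance (i.e. Σ is discrete and closed in ℂ), and let m : Σ → ℤ \ {0} be an arbitrary function. Then there exists a meromorphic function g on the half-plane Re z > α whose set of poles coincides with Σ, all of whose poles are simple with residue Res_{z} g = m(z) for each z ∈ Σ, and which satisfies sup_{Re z > 1} |z|² |g(z)| < ∞. -/
open Complex Filter Topology Set Metric

/-!
For `s ∈ S` let `b` be the reflection of `s` in the line `Re z = α` and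
`T_s(z) = m(s) ((s - b) / (z - b))^k / (z - s)`: a simple pole with residue `m(s)` at `s`, and
no other pole in `Re z > α`. The damping factor `|s - b| / |z - b|` is at most `1/2` once
`|z - s| ≥ 3`, because `|s - b| = 2 (Re s - α) ≤ 1`; on `Re z > 1` it is at most
`|s - b| / (1 - 2α + Re s) < 1`, and two of its powers absorb `|z|²`. The discrete set `S` is
countable, so we may fix positive weights `u_s` of finite sum and take `k = k(s)` so large that
`|T_s| ≤ u_s` at distance `≥ 3` from `s` and `|z|² |T_s(z)| ≤ u_s` on `Re z > 1`. Near any point,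
`∑ T_s` is then a finite sum of terms `T_s` plus a uniformly convergent series of holomorphic
functions.
-/

section AccPt

variable {X : Type*} [TopologicalSpace X] {S : Set X}

lemma finite_inter_of_forall_not_accPt (hS : ∀ x, ¬AccPt x (𝓟 S)) {K : Set X}
    (hK : IsCompact K) : (S ∩ K).Finite := by
  by_contra hinf
  obtain ⟨x, -, hx⟩ := Set.Infinite.exists_accPt_of_subset_isCompact hinf hK inter_subset_right
  exact hS x (hx.mono (principal_mono.2 inter_subset_left))

lemma countable_of_forall_not_accPt [SecondCountableTopology X]
    (hS : ∀ x ∈ S, ¬AccPt x (𝓟 S)) : S.Countable := by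
  have := discreteTopology_of_noAccPts hS
  exact countable_coe_iff.mp (TopologicalSpace.separableSpace_iff_countable.mp inferInstance)

end AccPt

lemma finite_setOf_norm_sub_le {S : Set ℂ} (hS : ∀ z, ¬AccPt z (𝓟 S)) (z : ℂ) (r : ℝ) :
    {s : S | ‖(s : ℂ) - z‖ ≤ r}.Finite :=
  ((finite_inter_of_forall_not_accPt hS (isCompact_closedBall z r)).preimage
    Subtype.val_injective.injOn).subset fun s hs => ⟨s.2, by simpa [dist_eq_norm] using hs⟩

lemma tendsto_sub_mul_add_of_continuousAt {𝕜 : Type*} [NormedField 𝕜] {f h : 𝕜 → 𝕜} {s a : 𝕜}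
    (hf : Tendsto (fun w => (w - s) * f w) (𝓝[≠] s) (𝓝 a)) (hh : ContinuousAt h s) :
    Tendsto (fun w => (w - s) * (f w + h w)) (𝓝[≠] s) (𝓝 a) := by
  have hzero : Tendsto (fun w => (w - s) * h w) (𝓝[≠] s) (𝓝 0) := by
    have hcont : ContinuousAt (fun w => (w - s) * h w) s := by fun_prop
    simpa using hcont.tendsto.mono_left nhdsWithin_le_nhds
  simpa [mul_add] using hf.add hzero

lemma norm_mul_norm_tsum_le_of_hasSum {𝕜 ι : Type*} [NormedDivisionRing 𝕜] {f : ι → 𝕜}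
    {u : ι → ℝ} {c : ℝ} (w : 𝕜) (hu : HasSum u c) (hf : ∀ i, ‖w‖ * ‖f i‖ ≤ u i) :
    ‖w‖ * ‖∑' i, f i‖ ≤ c := by
  rw [← norm_mul, ← tsum_mul_left]
  exact tsum_of_norm_bounded hu fun i => (norm_mul w (f i)).trans_le (hf i)

section LocallyDominatedSeries

variable {S : Set ℂ} {f : S → ℂ → ℂ} {u : S → ℝ} {R : ℝ}

lemma summable_of_norm_le_of_le_norm_sub (hS : ∀ z, ¬AccPt z (𝓟 S)) (hu : Summable u)
    (hf : ∀ (s : S) z, R ≤ ‖z - (s : ℂ)‖ → ‖f s z‖ ≤ u s) (z : ℂ) : Summable fun s => f s z := by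
  refine hu.of_norm_bounded_eventually (eventually_cofinite.2 ?_)
  refine (finite_setOf_norm_sub_le hS z R).subset fun s hs => ?_
  by_contra hfar
  exact hs (hf s z (by rw [norm_sub_rev]; exact (not_le.1 hfar).le))

lemma exists_finset_tsum_eq_sum_add_analyticAt (hS : ∀ z, ¬AccPt z (𝓟 S)) (hu : Summable u)
    (hf : ∀ (s : S) z, R ≤ ‖z - (s : ℂ)‖ → DifferentiableAt ℂ (f s) z ∧ ‖f s z‖ ≤ u s) (z₀ : ℂ) :
    ∃ F : Finset S, (∀ s : S, (s : ℂ) = z₀ → s ∈ F) ∧ ∃ h : ℂ → ℂ, AnalyticAt ℂ h z₀ ∧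
      ∀ z, ∑' s, f s z = ∑ s ∈ F, f s z + h z := by
  set F := (finite_setOf_norm_sub_le hS z₀ (|R| + 1)).toFinset
  have hF : ∀ s : S, ‖(s : ℂ) - z₀‖ ≤ |R| + 1 → s ∈ F := fun s hs => by simpa [F] using hs
  have hfar : ∀ s : ↥((F : Set S)ᶜ), ∀ z ∈ ball z₀ 1, R ≤ ‖z - s‖ := by
    intro s z hz
    have hs : |R| + 1 < ‖(s : ℂ) - z₀‖ := not_le.1 (mt (hF s) s.2)
    have := norm_sub_le_norm_sub_add_norm_sub (s : ℂ) z z₀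
    rw [mem_ball, dist_eq_norm] at hz
    rw [norm_sub_rev]
    linarith [le_abs_self R]
  have hsummable z := summable_of_norm_le_of_le_norm_sub hS hu (fun s z h => (hf s z h).2) z
  refine ⟨F, fun s hs => hF s (by simp [hs]; positivity), _, ?_, fun z =>
    (hsummable z).sum_add_tsum_compl.symm⟩
  refine DifferentiableOn.analyticAt ?_ (ball_mem_nhds z₀ one_pos)
  exact differentiableOn_tsum_of_summable_norm (hu.subtype _)
    (fun s z hz => (hf s z (hfar s z hz)).1.differentiableWithinAt) isOpen_ball
    (fun s z hz => (hf s z (hfar s z hz)).2)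

lemma meromorphicAt_tsum (hS : ∀ z, ¬AccPt z (𝓟 S)) (hu : Summable u)
    (hf : ∀ (s : S) z, R ≤ ‖z - (s : ℂ)‖ → DifferentiableAt ℂ (f s) z ∧ ‖f s z‖ ≤ u s) {z₀ : ℂ}
    (hf₀ : ∀ s, MeromorphicAt (f s) z₀) : MeromorphicAt (fun z => ∑' s, f s z) z₀ := by
  obtain ⟨F, -, h, hh, hsum⟩ := exists_finset_tsum_eq_sum_add_analyticAt hS hu hf z₀
  rw [funext hsum]
  exact (MeromorphicAt.fun_sum fun s _ => hf₀ s).add hh.meromorphicAt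

lemma analyticAt_tsum (hS : ∀ z, ¬AccPt z (𝓟 S)) (hu : Summable u)
    (hf : ∀ (s : S) z, R ≤ ‖z - (s : ℂ)‖ → DifferentiableAt ℂ (f s) z ∧ ‖f s z‖ ≤ u s) {z₀ : ℂ}
    (hf₀ : ∀ s, AnalyticAt ℂ (f s) z₀) : AnalyticAt ℂ (fun z => ∑' s, f s z) z₀ := by
  obtain ⟨F, -, h, hh, hsum⟩ := exists_finset_tsum_eq_sum_add_analyticAt hS hu hf z₀
  rw [funext hsum]
  exact (Finset.analyticAt_fun_sum F fun s _ => hf₀ s).add hh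

lemma tendsto_sub_mul_tsum (hS : ∀ z, ¬AccPt z (𝓟 S)) (hu : Summable u)
    (hf : ∀ (s : S) z, R ≤ ‖z - (s : ℂ)‖ → DifferentiableAt ℂ (f s) z ∧ ‖f s z‖ ≤ u s) {s₀ : S}
    {a : ℂ} (hf₀ : Tendsto (fun w => (w - s₀) * f s₀ w) (𝓝[≠] (s₀ : ℂ)) (𝓝 a))
    (hf_ne : ∀ s ≠ s₀, AnalyticAt ℂ (f s) s₀) :
    Tendsto (fun w => (w - s₀) * ∑' s, f s w) (𝓝[≠] (s₀ : ℂ)) (𝓝 a) := by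
  obtain ⟨F, hF, h, hh, hsum⟩ := exists_finset_tsum_eq_sum_add_analyticAt hS hu hf s₀
  have hsplit : ∀ w, ∑' s, f s w = f s₀ w + (∑ s ∈ F.erase s₀, f s w + h w) := by
    intro w
    rw [hsum, ← Finset.add_sum_erase F _ (hF s₀ rfl)]
    ring
  simp_rw [hsplit]
  refine tendsto_sub_mul_add_of_continuousAt hf₀ ?_
  exact ((Finset.analyticAt_fun_sum _ fun s hs => hf_ne s (Finset.ne_of_mem_erase hs)).add
    hh).continuousAt

end LocallyDominatedSeries

noncomputable def poleTerm (a b s : ℂ) (k : ℕ) (z : ℂ) : ℂ :=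
  a * ((s - b) / (z - b)) ^ k / (z - s)

section PoleTerm

variable {a b s z : ℂ} {k : ℕ}

lemma analyticAt_poleTerm (hzb : z ≠ b) (hzs : z ≠ s) : AnalyticAt ℂ (poleTerm a b s k) z := by
  unfold poleTerm
  fun_prop (disch := simp [sub_ne_zero, *])

lemma meromorphicAt_poleTerm : MeromorphicAt (poleTerm a b s k) z := by
  unfold poleTerm
  fun_prop

lemma tendsto_sub_mul_poleTerm (hbs : b ≠ s) :
    Tendsto (fun w => (w - s) * poleTerm a b s k w) (𝓝[≠] s) (𝓝 a) := by
  have hsb : s - b ≠ 0 := sub_ne_zero.2 hbs.symm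
  have hcont : ContinuousAt (fun w => a * ((s - b) / (w - b)) ^ k) s := by
    fun_prop (disch := exact hsb)
  have hval : a * ((s - b) / (s - b)) ^ k = a := by rw [div_self hsb, one_pow, mul_one]
  rw [ContinuousAt, hval] at hcont
  refine (hcont.mono_left nhdsWithin_le_nhds).congr' ?_
  filter_upwards [self_mem_nhdsWithin] with w hw
  rw [poleTerm, mul_div_cancel₀ _ (sub_ne_zero.2 hw)]

lemma norm_poleTerm : ‖poleTerm a b s k z‖ = ‖a‖ * (‖s - b‖ / ‖z - b‖) ^ k / ‖z - s‖ := by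
  simp only [poleTerm, norm_div, norm_mul, norm_pow]

lemma two_le_norm_sub_of_three_le (hsb : ‖s - b‖ ≤ 1) (hz : 3 ≤ ‖z - s‖) : 2 ≤ ‖z - b‖ := by
  linarith [norm_sub_le_norm_sub_add_norm_sub z b s, norm_sub_rev b s]

lemma norm_poleTerm_le_of_far (hsb : ‖s - b‖ ≤ 1) (hzb : 2 ≤ ‖z - b‖) (hzs : 1 ≤ ‖z - s‖) :
    ‖poleTerm a b s k z‖ ≤ ‖a‖ * (1 / 2) ^ k := by
  have hq : ‖s - b‖ / ‖z - b‖ ≤ 1 / 2 := by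
    rw [div_le_iff₀ (by linarith)]
    linarith
  rw [norm_poleTerm]
  calc ‖a‖ * (‖s - b‖ / ‖z - b‖) ^ k / ‖z - s‖ ≤ ‖a‖ * (‖s - b‖ / ‖z - b‖) ^ k :=
        div_le_self (by positivity) hzs
    _ ≤ ‖a‖ * (1 / 2) ^ k := by gcongr

lemma norm_sq_mul_norm_poleTerm_le {δ ε : ℝ} (hδ : 0 < δ) (hzb : δ ≤ ‖z - b‖) (hε : 0 < ε)
    (hzs : ε ≤ ‖z - s‖) :
    ‖z‖ ^ 2 * ‖poleTerm a b s (k + 2) z‖ ≤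
      ‖a‖ * (‖s - b‖ * (1 + ‖b‖ / δ)) ^ 2 / ε * (‖s - b‖ / δ) ^ k := by
  have hzb₀ : 0 < ‖z - b‖ := hδ.trans_le hzb
  have hzq : ‖z‖ * (‖s - b‖ / ‖z - b‖) ≤ ‖s - b‖ * (1 + ‖b‖ / δ) := by
    have hz : ‖z‖ ≤ ‖z - b‖ + ‖b‖ := by simpa using norm_add_le (z - b) b
    calc ‖z‖ * (‖s - b‖ / ‖z - b‖) ≤ (‖z - b‖ + ‖b‖) * (‖s - b‖ / ‖z - b‖) := by gcongr
      _ = ‖s - b‖ * (1 + ‖b‖ / ‖z - b‖) := by field_simp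
      _ ≤ ‖s - b‖ * (1 + ‖b‖ / δ) := by gcongr
  calc ‖z‖ ^ 2 * ‖poleTerm a b s (k + 2) z‖
      = ‖a‖ * (‖z‖ * (‖s - b‖ / ‖z - b‖)) ^ 2 / ‖z - s‖ * (‖s - b‖ / ‖z - b‖) ^ k := by
        rw [norm_poleTerm]; ring
    _ ≤ ‖a‖ * (‖s - b‖ * (1 + ‖b‖ / δ)) ^ 2 / ε * (‖s - b‖ / δ) ^ k := by gcongr

end PoleTerm

def mirror (α : ℝ) (s : ℂ) : ℂ := ⟨2 * α - s.re, s.im⟩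

section Mirror

variable {α : ℝ} {a s z : ℂ}

@[simp] lemma mirror_re : (mirror α s).re = 2 * α - s.re := rfl

lemma mirror_re_lt (hs : α < s.re) : (mirror α s).re < α := by
  rw [mirror_re]
  linarith

lemma analyticAt_poleTerm_mirror {k : ℕ} (hs : α < s.re) (hz : α < z.re) (hzs : z ≠ s) :
    AnalyticAt ℂ (poleTerm a (mirror α s) s k) z :=
  analyticAt_poleTerm (ne_of_apply_ne re (by linarith [mirror_re_lt hs])) hzs

lemma tendsto_sub_mul_poleTerm_mirror {k : ℕ} (hs : α < s.re) :
    Tendsto (fun w => (w - s) * poleTerm a (mirror α s) s k w) (𝓝[≠] s) (𝓝 a) :=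
  tendsto_sub_mul_poleTerm (ne_of_apply_ne re (by linarith [mirror_re_lt hs]))

lemma norm_sub_mirror (hs : α ≤ s.re) : ‖s - mirror α s‖ = 2 * (s.re - α) := by
  have : s - mirror α s = ((2 * (s.re - α) : ℝ) : ℂ) := by
    apply Complex.ext <;> simp [mirror]; ring
  rw [this, norm_real, Real.norm_of_nonneg (by linarith)]

lemma norm_sub_mirror_le_one (hα : 1 / 2 ≤ α) (hs₁ : α < s.re) (hs₂ : s.re < 1) :
    ‖s - mirror α s‖ ≤ 1 := by
  rw [norm_sub_mirror hs₁.le]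
  linarith

lemma analyticAt_poleTerm_mirror_of_three_le {k : ℕ} (hα : 1 / 2 ≤ α) (hs₁ : α < s.re)
    (hs₂ : s.re < 1) (hz : 3 ≤ ‖z - s‖) : AnalyticAt ℂ (poleTerm a (mirror α s) s k) z := by
  have hzb := two_le_norm_sub_of_three_le (norm_sub_mirror_le_one hα hs₁ hs₂) hz
  exact analyticAt_poleTerm (norm_sub_pos_iff.1 (by linarith)) (norm_sub_pos_iff.1 (by linarith))

lemma exists_norm_sq_mul_norm_poleTerm_mirror_le (hs₁ : α < s.re) (hs₂ : s.re < 1) :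
    ∃ C ρ : ℝ, 0 ≤ ρ ∧ ρ < 1 ∧ ∀ k z, 1 < z.re →
      ‖z‖ ^ 2 * ‖poleTerm a (mirror α s) s (k + 2) z‖ ≤ C * ρ ^ k := by
  have hδ : 0 < 1 - 2 * α + s.re := by linarith
  have hε : 0 < 1 - s.re := by linarith
  refine ⟨_, _, by rw [norm_sub_mirror hs₁.le]; positivity, ?_, fun k z hz =>
    norm_sq_mul_norm_poleTerm_le hδ ?_ hε ?_⟩
  · rw [norm_sub_mirror hs₁.le, div_lt_one hδ]
    linarith
  · exact le_trans (by simp; linarith) (re_le_norm (z - mirror α s))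
  · exact le_trans (by simp; linarith) (re_le_norm (z - s))

lemma eventually_mul_pow_le {C ρ ε : ℝ} (hρ₀ : 0 ≤ ρ) (hρ : ρ < 1) (hε : 0 < ε) :
    ∀ᶠ k : ℕ in atTop, C * ρ ^ k ≤ ε := by
  have := (tendsto_pow_atTop_nhds_zero_of_lt_one hρ₀ hρ).const_mul C
  rw [mul_zero] at this
  exact this.eventually (ge_mem_nhds hε)

lemma exists_exponent_poleTerm_mirror_le (hα : 1 / 2 ≤ α) (hs₁ : α < s.re) (hs₂ : s.re < 1)
    {ε : ℝ} (hε : 0 < ε) :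
    ∃ k : ℕ, (∀ z, 3 ≤ ‖z - s‖ → ‖poleTerm a (mirror α s) s (k + 2) z‖ ≤ ε) ∧
      ∀ z, 1 < z.re → ‖z‖ ^ 2 * ‖poleTerm a (mirror α s) s (k + 2) z‖ ≤ ε := by
  obtain ⟨C, ρ, hρ₀, hρ, hright⟩ := exists_norm_sq_mul_norm_poleTerm_mirror_le (a := a) hs₁ hs₂
  have hfar := (tendsto_add_atTop_nat 2).eventually
    (eventually_mul_pow_le (C := ‖a‖) (by norm_num) (by norm_num : (1 / 2 : ℝ) < 1) hε)
  obtain ⟨k, hk_far, hk_right⟩ := (hfar.and (eventually_mul_pow_le (C := C) hρ₀ hρ hε)).exists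
  have hsb := norm_sub_mirror_le_one hα hs₁ hs₂
  refine ⟨k, fun z hz => ?_, fun z hz => (hright k z hz).trans hk_right⟩
  exact (norm_poleTerm_le_of_far hsb (two_le_norm_sub_of_three_le hsb hz)
    (by linarith)).trans hk_far

end Mirror

theorem exists_meromorphic_with_simple_poles_general (α : ℝ) (hα : 1 / 2 ≤ α)
    (S : Set ℂ) (hS : S ⊆ {z : ℂ | α < z.re ∧ z.re < 1})
    (hacc : ∀ z : ℂ, ¬ AccPt z (𝓟 S))
    (m : ℂ → ℤ) :
    ∃ g : ℂ → ℂ, MeromorphicOn g {z : ℂ | α < z.re} ∧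
      (∀ z ∈ {z : ℂ | α < z.re} \ S, AnalyticAt ℂ g z) ∧
      (∀ z ∈ S, Tendsto (fun w => (w - z) * g w) (𝓝[≠] z) (𝓝 ((m z : ℤ) : ℂ))) ∧
      ∃ C : ℝ, ∀ z : ℂ, 1 < z.re → ‖z‖ ^ 2 * ‖g z‖ ≤ C := by
  obtain ⟨u, hu_pos, c, hu, -⟩ :=
    (countable_of_forall_not_accPt fun z _ => hacc z).exists_pos_hasSum_le one_pos
  choose k hk using fun s : S =>
    exists_exponent_poleTerm_mirror_le (a := m s) hα (hS s.2).1 (hS s.2).2 (hu_pos s)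
  set f : S → ℂ → ℂ := fun s => poleTerm (m s) (mirror α s) s (k s + 2)
  have hf_far : ∀ (s : S) (z : ℂ), 3 ≤ ‖z - (s : ℂ)‖ →
      DifferentiableAt ℂ (f s) z ∧ ‖f s z‖ ≤ u s := fun s z hz =>
    ⟨(analyticAt_poleTerm_mirror_of_three_le hα (hS s.2).1 (hS s.2).2 hz).differentiableAt,
      (hk s).1 z hz⟩
  refine ⟨fun z => ∑' s, f s z,
    fun z _ => meromorphicAt_tsum hacc hu.summable hf_far fun s => meromorphicAt_poleTerm,
    fun z hz => analyticAt_tsum hacc hu.summable hf_far fun s =>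
      analyticAt_poleTerm_mirror (hS s.2).1 hz.1 fun h => hz.2 (h ▸ s.2),
    fun z hz => tendsto_sub_mul_tsum hacc hu.summable hf_far (s₀ := ⟨z, hz⟩)
      (tendsto_sub_mul_poleTerm_mirror (hS hz).1) fun s hs =>
        analyticAt_poleTerm_mirror (hS s.2).1 (hS hz).1 fun h => hs (Subtype.ext h.symm),
    c, fun z hz => ?_⟩
  rw [← norm_pow]
  exact norm_mul_norm_tsum_le_of_hasSum _ hu fun s => by rw [norm_pow]; exact (hk s).2 z hz

/-- Lemma 3: for `1/2 ≤ α < 1`, a set `Σ` in the strip `α < Re z < 1` with no finite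
accumulation points, and `m : Σ → ℤ \ {0}`, there is a meromorphic function `g` on
`Re z > α` whose poles are exactly `Σ`, all simple with residue `m(z)` at `z ∈ Σ`, and with
`sup_{Re z > 1} |z|² |g(z)| < ∞`. -/
theorem exists_meromorphic_with_simple_poles (α : ℝ) (hα : 1 / 2 ≤ α) (hα1 : α < 1)
    (S : Set ℂ) (hS : S ⊆ {z : ℂ | α < z.re ∧ z.re < 1})
    (hacc : ∀ z : ℂ, ¬ AccPt z (𝓟 S))
    (m : ℂ → ℤ) (hm : ∀ z ∈ S, m z ≠ 0) :
    ∃ g : ℂ → ℂ, MeromorphicOn g {z : ℂ | α < z.re} ∧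
      (∀ z ∈ {z : ℂ | α < z.re} \ S, AnalyticAt ℂ g z) ∧
      (∀ z ∈ S, Tendsto (fun w => (w - z) * g w) (𝓝[≠] z) (𝓝 ((m z : ℤ) : ℂ))) ∧
      ∃ C : ℝ, ∀ z : ℂ, 1 < z.re → ‖z‖ ^ 2 * ‖g z‖ ≤ C :=
  exists_meromorphic_with_simple_poles_general α hα S hS hacc m
end

section
/- Let q : [1, ∞) → ℂ be bounded and measurable, let 𝒫 be a set of primes, let χ : 𝒫 → ℂ with |χ(p)| = 1 for all p ∈ 𝒫, and set r(x) = ∫₁^x q(y) dy − Σ_{p ≤ x, p ∈ 𝒫} χ(p) log p. Define the sequence x₀ = 2, x_{j+1} = x_j + x_j^{21/40}. If r(x_j) = O(x_j^{21/40} log x_j) as j → ∞, then r(x) = O(x^{21/40} log x) as x → ∞. -/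
open Filter Set MeasureTheory

/-!
Let `x_j ≤ y < x_{j+1}`. The gap `y - x_j` is at most `x_j^{21/40} ≤ y^{21/40}`, and over an
interval of length `h ≤ y` the integral of `q` moves by at most `M h` while the prime sum moves by
at most `(h + 1) log y` (at most `h + 1` integers, each weighted by `|χ(p)| log p ≤ log y`). Hence
`‖r y - r x_j‖ = O(y^{21/40} log y)`, and `‖r x_j‖ = O(x_j^{21/40} log x_j) ≤ O(y^{21/40} log y)`
because `y^{21/40} log y` is increasing.
-/

theorem norm_setIntegral_Ioc_sub_le {E : Type*} [NormedAddCommGroup E] [NormedSpace ℝ E]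
    {q : ℝ → E} {M c a b : ℝ} (hqm : AEStronglyMeasurable q) (hM : ∀ y, ‖q y‖ ≤ M)
    (hca : c ≤ a) (hab : a ≤ b) :
    ‖(∫ y in Ioc c b, q y) - ∫ y in Ioc c a, q y‖ ≤ M * (b - a) := by
  have hint : ∀ u v : ℝ, IntegrableOn q (Ioc u v) := fun u v =>
    Measure.integrableOn_of_bounded measure_Ioc_lt_top.ne hqm (Eventually.of_forall hM)
  rw [← intervalIntegral.integral_of_le (hca.trans hab), ← intervalIntegral.integral_of_le hca,
    intervalIntegral.integral_interval_sub_left ⟨hint c b, hint b c⟩ ⟨hint c a, hint a c⟩]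
  simpa [abs_of_nonneg (sub_nonneg.mpr hab)] using
    intervalIntegral.norm_integral_le_of_norm_le_const (fun y _ => hM y) (a := a) (b := b)

theorem norm_sum_Iic_floor_sub_le {E : Type*} [SeminormedAddCommGroup E] {f : ℕ → E}
    {B a b : ℝ} (ha : 0 ≤ a) (hab : a ≤ b)
    (hf : ∀ n ∈ Finset.Ioc ⌊a⌋₊ ⌊b⌋₊, ‖f n‖ ≤ B) (hB : 0 ≤ B) :
    ‖∑ n ∈ Finset.Iic ⌊b⌋₊, f n - ∑ n ∈ Finset.Iic ⌊a⌋₊, f n‖ ≤ (b - a + 1) * B := by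
  have hfloor : ⌊a⌋₊ ≤ ⌊b⌋₊ := Nat.floor_mono hab
  rw [← Finset.sum_sdiff (Finset.Ioc_subset_Iic_self (a := ⌊a⌋₊)) (s₂ := Finset.Iic ⌊b⌋₊),
    Finset.Iic_sdiff_Ioc_self_of_le hfloor, add_sub_cancel_left]
  have hcard : ((Finset.Ioc ⌊a⌋₊ ⌊b⌋₊).card : ℝ) ≤ b - a + 1 := by
    rw [Nat.card_Ioc, Nat.cast_sub hfloor]
    linarith [Nat.floor_le (ha.trans hab), Nat.lt_floor_add_one a]
  calc ‖∑ n ∈ Finset.Ioc ⌊a⌋₊ ⌊b⌋₊, f n‖ ≤ ∑ n ∈ Finset.Ioc ⌊a⌋₊ ⌊b⌋₊, ‖f n‖ := norm_sum_le _ _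
    _ ≤ (Finset.Ioc ⌊a⌋₊ ⌊b⌋₊).card • B := Finset.sum_le_card_nsmul _ _ _ hf
    _ ≤ (b - a + 1) * B := by rw [nsmul_eq_mul]; gcongr

theorem exists_le_lt_succ_of_tendsto_atTop {α : Type*} [LinearOrder α] [NoMaxOrder α]
    {x : ℕ → α} (hx : Tendsto x atTop atTop) {N : ℕ} {y : α} (hy : x N ≤ y) :
    ∃ j ≥ N, x j ≤ y ∧ y < x (j + 1) := by
  classical
  have hex : ∃ k, N < k ∧ y < x k :=
    ((eventually_gt_atTop N).and (hx.eventually_gt_atTop y)).exists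
  obtain ⟨hNk, hyk⟩ := Nat.find_spec hex
  refine ⟨Nat.find hex - 1, by omega, ?_, by rwa [Nat.sub_add_cancel (by omega)]⟩
  rcases (Nat.le_sub_one_of_lt hNk).eq_or_lt with h | h
  · rwa [← h]
  · exact le_of_not_gt fun hlt => Nat.find_min hex (by omega) ⟨h, hlt⟩

theorem isBigO_of_isBigO_comp_of_norm_sub_le {α E F : Type*} [LinearOrder α] [NoMaxOrder α]
    [SeminormedAddCommGroup E] [SeminormedAddCommGroup F]
    {f : α → E} {g : α → F} {x : ℕ → α} {T : α} {C : ℝ} (hx : Tendsto x atTop atTop)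
    (hg : MonotoneOn (fun y => ‖g y‖) (Ici T)) (hfx : (f ∘ x) =O[atTop] (g ∘ x))
    (hgap : ∀ᶠ j in atTop, ∀ y ∈ Ico (x j) (x (j + 1)), ‖f y - f (x j)‖ ≤ C * ‖g y‖) :
    f =O[atTop] g := by
  obtain ⟨c, hc, hfx⟩ := hfx.exists_pos
  obtain ⟨N, hN⟩ := eventually_atTop.mp
    (hfx.bound.and (hgap.and (hx.eventually_ge_atTop T)))
  refine Asymptotics.IsBigO.of_bound (c + C) ((eventually_ge_atTop (x N)).mono fun y hy => ?_)
  obtain ⟨j, hjN, hjy, hyj⟩ := exists_le_lt_succ_of_tendsto_atTop hx hy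
  obtain ⟨hfj, hgapj, hTj⟩ := hN j hjN
  have hgj : ‖g (x j)‖ ≤ ‖g y‖ := hg hTj (hTj.trans hjy) hjy
  calc ‖f y‖ ≤ ‖f (x j)‖ + ‖f y - f (x j)‖ := norm_le_norm_add_norm_sub' _ _
    _ ≤ c * ‖g y‖ + C * ‖g y‖ :=
      add_le_add (hfj.trans (mul_le_mul_of_nonneg_left hgj hc.le)) (hgapj y ⟨hjy, hyj⟩)
    _ = (c + C) * ‖g y‖ := by ring

theorem add_natCast_le_of_rpow_recurrence {x : ℕ → ℝ} {θ : ℝ} (hθ : 0 ≤ θ) (h0 : 1 ≤ x 0)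
    (hsucc : ∀ j, x (j + 1) = x j + x j ^ θ) (j : ℕ) : x 0 + j ≤ x j := by
  induction j with
  | zero => simp
  | succ j ih =>
    rw [hsucc, Nat.cast_succ]
    linarith [Real.one_le_rpow (show 1 ≤ x j by linarith [j.cast_nonneg (α := ℝ)]) hθ]

theorem monotoneOn_norm_rpow_mul_log {θ : ℝ} (hθ : 0 ≤ θ) :
    MonotoneOn (fun y : ℝ => ‖y ^ θ * Real.log y‖) (Ici 1) := by
  intro a (ha : 1 ≤ a) b (hb : 1 ≤ b) hab
  have hnonneg {y : ℝ} (hy : 1 ≤ y) : 0 ≤ y ^ θ * Real.log y :=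
    mul_nonneg (Real.rpow_nonneg (by linarith) θ) (Real.log_nonneg hy)
  simp only [Real.norm_of_nonneg (hnonneg ha), Real.norm_of_nonneg (hnonneg hb)]
  exact mul_le_mul (Real.rpow_le_rpow (by linarith) hab hθ) (Real.log_le_log (by linarith) hab)
    (Real.log_nonneg ha) (Real.rpow_nonneg (by linarith) θ)

open scoped Classical in
theorem norm_remainder_sub_le {q : ℝ → ℂ} {M : ℝ} (hM : ∀ y, ‖q y‖ ≤ M)
    (hqm : AEStronglyMeasurable q) {P : Set ℕ} {χ : ℕ → ℂ} (hχ : ∀ p ∈ P, ‖χ p‖ = 1)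
    {r : ℝ → ℂ}
    (hr : ∀ x : ℝ, r x = (∫ y in Ioc (1 : ℝ) x, q y) -
      ∑ p ∈ Finset.filter (fun p => p.Prime ∧ p ∈ P) (Finset.Iic ⌊x⌋₊),
        χ p * (Real.log p : ℂ))
    {a b : ℝ} (ha : 1 ≤ a) (hab : a ≤ b) :
    ‖r b - r a‖ ≤ M * (b - a) + (b - a + 1) * Real.log b := by
  have hlogb : 0 ≤ Real.log b := Real.log_nonneg (ha.trans hab)
  have hterm : ∀ n ∈ Finset.Ioc ⌊a⌋₊ ⌊b⌋₊,
      ‖if n.Prime ∧ n ∈ P then χ n * (Real.log n : ℂ) else 0‖ ≤ Real.log b := by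
    intro n hn
    split_ifs with hnP
    · have hnb : (n : ℝ) ≤ b :=
        (Nat.cast_le.mpr (Finset.mem_Ioc.mp hn).2).trans (Nat.floor_le (by linarith))
      rw [norm_mul, hχ n hnP.2, one_mul, Complex.norm_real, Real.norm_of_nonneg
        (Real.log_nonneg (by exact_mod_cast hnP.1.one_le))]
      exact Real.log_le_log (by exact_mod_cast hnP.1.pos) hnb
    · rwa [norm_zero]
  rw [hr b, hr a, Finset.sum_filter, Finset.sum_filter, sub_sub_sub_comm]
  exact (norm_sub_le _ _).trans <| add_le_add
    (norm_setIntegral_Ioc_sub_le hqm hM ha hab)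
    (norm_sum_Iic_floor_sub_le (by linarith) hab hterm hlogb)

open scoped Classical in
theorem norm_remainder_sub_le_rpow_mul_log {q : ℝ → ℂ} {M : ℝ} (hM : ∀ y, ‖q y‖ ≤ M)
    (hqm : AEStronglyMeasurable q) {P : Set ℕ} {χ : ℕ → ℂ} (hχ : ∀ p ∈ P, ‖χ p‖ = 1)
    {r : ℝ → ℂ}
    (hr : ∀ x : ℝ, r x = (∫ y in Ioc (1 : ℝ) x, q y) -
      ∑ p ∈ Finset.filter (fun p => p.Prime ∧ p ∈ P) (Finset.Iic ⌊x⌋₊),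
        χ p * (Real.log p : ℂ))
    {θ a b : ℝ} (hθ : 0 ≤ θ) (ha : 3 ≤ a) (hab : a ≤ b) (hba : b ≤ a + a ^ θ) :
    ‖r b - r a‖ ≤ (M + 2) * (b ^ θ * Real.log b) := by
  have hM0 : 0 ≤ M := (norm_nonneg _).trans (hM 0)
  have hgap : b - a ≤ b ^ θ := by
    linarith [Real.rpow_le_rpow (by linarith) hab hθ]
  have hpow : 1 ≤ b ^ θ := Real.one_le_rpow (by linarith) hθ
  have hlog : 1 ≤ Real.log b := by
    rw [Real.le_log_iff_exp_le (by linarith)]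
    linarith [Real.exp_one_lt_d9]
  calc ‖r b - r a‖ ≤ M * (b - a) + (b - a + 1) * Real.log b :=
        norm_remainder_sub_le hM hqm hχ hr (by linarith) hab
    _ ≤ M * (b ^ θ * Real.log b) + (2 * b ^ θ) * Real.log b := by
        gcongr
        · exact hgap.trans (le_mul_of_one_le_right (by linarith) hlog)
        · linarith
    _ = (M + 2) * (b ^ θ * Real.log b) := by ring

open scoped Classical in
theorem bigO_on_sequence_implies_bigO_general (q : ℝ → ℂ)
    (hqb : ∃ M : ℝ, ∀ x : ℝ, ‖q x‖ ≤ M) (hqm : Measurable q)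
    (P : Set ℕ)
    (χ : ℕ → ℂ) (hχ : ∀ p ∈ P, ‖χ p‖ = 1)
    (r : ℝ → ℂ)
    (hr : ∀ x : ℝ, r x = (∫ y in Ioc (1 : ℝ) x, q y) -
      ∑ p ∈ Finset.filter (fun p => p.Prime ∧ p ∈ P) (Finset.Iic ⌊x⌋₊),
        χ p * (Real.log p : ℂ))
    (x : ℕ → ℝ) (hx0 : x 0 = 2)
    (hxsucc : ∀ j : ℕ, x (j + 1) = x j + x j ^ ((21 : ℝ) / 40))
    (hOseq : (fun j : ℕ => r (x j)) =O[atTop]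
      fun j : ℕ => x j ^ ((21 : ℝ) / 40) * Real.log (x j)) :
    r =O[atTop] fun y : ℝ => y ^ ((21 : ℝ) / 40) * Real.log y := by
  obtain ⟨M, hM⟩ := hqb
  have hθ : (0 : ℝ) ≤ 21 / 40 := by norm_num
  have hx : Tendsto x atTop atTop :=
    tendsto_atTop_mono (add_natCast_le_of_rpow_recurrence hθ (by rw [hx0]; norm_num) hxsucc)
      (tendsto_atTop_add_const_left _ _ tendsto_natCast_atTop_atTop)
  refine isBigO_of_isBigO_comp_of_norm_sub_le (C := M + 2) hx
    (monotoneOn_norm_rpow_mul_log hθ) hOseq ?_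
  filter_upwards [hx.eventually_ge_atTop 3] with j hj y ⟨hjy, hyj⟩
  have hy := norm_remainder_sub_le_rpow_mul_log hM hqm.aestronglyMeasurable hχ hr hθ hj hjy
    (hxsucc j ▸ hyj.le)
  exact hy.trans (mul_le_mul_of_nonneg_left (Real.le_norm_self _)
    (by linarith [(norm_nonneg _).trans (hM 0)]))

open scoped Classical in
/-- If `r(x) = ∫₁^x q(y) dy − ∑_{p ≤ x, p ∈ P} χ(p) log p` (with `q` bounded measurable and
`|χ(p)| = 1` on the prime set `P`), and `r(x_j) = O(x_j^{21/40} log x_j)` along the sequence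
`x₀ = 2`, `x_{j+1} = x_j + x_j^{21/40}`, then `r(x) = O(x^{21/40} log x)` as `x → ∞`. -/
theorem bigO_on_sequence_implies_bigO (q : ℝ → ℂ)
    (hqb : ∃ M : ℝ, ∀ x : ℝ, ‖q x‖ ≤ M) (hqm : Measurable q)
    (P : Set ℕ) (hP : ∀ p ∈ P, p.Prime)
    (χ : ℕ → ℂ) (hχ : ∀ p ∈ P, ‖χ p‖ = 1)
    (r : ℝ → ℂ)
    (hr : ∀ x : ℝ, r x = (∫ y in Ioc (1 : ℝ) x, q y) -
      ∑ p ∈ Finset.filter (fun p => p.Prime ∧ p ∈ P) (Finset.Iic ⌊x⌋₊),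
        χ p * (Real.log p : ℂ))
    (x : ℕ → ℝ) (hx0 : x 0 = 2)
    (hxsucc : ∀ j : ℕ, x (j + 1) = x j + x j ^ ((21 : ℝ) / 40))
    (hOseq : (fun j : ℕ => r (x j)) =O[atTop]
      fun j : ℕ => x j ^ ((21 : ℝ) / 40) * Real.log (x j)) :
    r =O[atTop] fun y : ℝ => y ^ ((21 : ℝ) / 40) * Real.log y :=
  bigO_on_sequence_implies_bigO_general q hqb hqm P χ hχ r hr x hx0 hxsucc hOseq
end

section
/- Let 1/2 ≤ α < 1, let z₀ ∈ ℂ with α < Re z₀ < 1, and let C > 0. Then there exists n ∈ ℕ such that the function g_{z₀}(z) = 1/((z − z₀)(z − z₀ + 1)^{2n}) satisfies: (i) |g_{z₀}(z)| < C for all z with Re z > 1; (ii) g_{z₀} is analytic on {Re z > α} \ {z₀} and has a simple pole at z₀ with residue 1; (iii) |g_{z₀}(z)| < C for all z with Re z > α and |z − z₀| > 20. -/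
open Complex Filter Topology Set

/-! Near `z₀` the factor `(z - z₀ + 1) ^ (2 * n)` is close to `1`, which gives the residue. On
both regions `Re z > 1` and `|z - z₀| > 20` we have `|z - z₀| ≥ d` and `|z - z₀ + 1| ≥ 1 + d` for
`d = min (1 - Re z₀) 18 > 0`, so `|g| ≤ 1 / (d (1 + d) ^ (2 * n))`, which is below `C` for large
`n`. -/

theorem eventually_norm_inv_mul_pow_lt {𝕜 : Type*} [NormedDivisionRing 𝕜] {d q C : ℝ}
    (hd : 0 < d) (hq : 1 < q) (hC : 0 < C) :
    ∀ᶠ n : ℕ in atTop, ∀ x y : 𝕜, d ≤ ‖x‖ → q ≤ ‖y‖ → ‖(x * y ^ n)⁻¹‖ < C := by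
  have hlim : Tendsto (fun n : ℕ => (d * q ^ n)⁻¹) atTop (𝓝 0) :=
    ((tendsto_pow_atTop_atTop_of_one_lt hq).const_mul_atTop hd).inv_tendsto_atTop
  filter_upwards [hlim.eventually (gt_mem_nhds hC)] with n hn x y hx hy
  calc ‖(x * y ^ n)⁻¹‖ = (‖x‖ * ‖y‖ ^ n)⁻¹ := by rw [norm_inv, norm_mul, norm_pow]
    _ ≤ (d * q ^ n)⁻¹ := by gcongr
    _ < C := hn

theorem analyticOnNhd_one_div_sub_mul_sub_add_one_pow {𝕜 : Type*} [NontriviallyNormedField 𝕜]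
    (z₀ : 𝕜) (m : ℕ) :
    AnalyticOnNhd 𝕜 (fun z => 1 / ((z - z₀) * (z - z₀ + 1) ^ m)) {z₀, z₀ - 1}ᶜ := by
  intro z hz
  simp only [mem_compl_iff, mem_insert_iff, mem_singleton_iff, not_or] at hz
  have hz' : z - z₀ + 1 ≠ 0 := fun h => hz.2 (by linear_combination h)
  fun_prop (disch := simp [sub_ne_zero.2 hz.1, hz'])

theorem tendsto_sub_mul_one_div_sub_mul_sub_add_one_pow {𝕜 : Type*} [NormedField 𝕜]
    (z₀ : 𝕜) (m : ℕ) :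
    Tendsto (fun z => (z - z₀) * (1 / ((z - z₀) * (z - z₀ + 1) ^ m))) (𝓝[≠] z₀) (𝓝 1) := by
  have hcont : ContinuousAt (fun z => ((z - z₀ + 1) ^ m)⁻¹) z₀ :=
    ContinuousAt.inv₀ (by fun_prop) (by simp)
  have hlim := hcont.tendsto.mono_left (nhdsWithin_le_nhds (s := {z₀}ᶜ))
  simp only [sub_self, zero_add, one_pow, inv_one] at hlim
  refine hlim.congr' ?_
  filter_upwards [self_mem_nhdsWithin] with z hz
  rw [one_div, mul_inv, ← mul_assoc, mul_inv_cancel₀ (sub_ne_zero.2 hz), one_mul]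

theorem exists_pole_bump_general (α : ℝ) (hα : 1 / 2 ≤ α)
    (z₀ : ℂ) (hz₀' : z₀.re < 1) (C : ℝ) (hC : 0 < C) :
    ∃ n : ℕ,
      (∀ z : ℂ, 1 < z.re → ‖1 / ((z - z₀) * (z - z₀ + 1) ^ (2 * n))‖ < C) ∧
      AnalyticOnNhd ℂ (fun z : ℂ => 1 / ((z - z₀) * (z - z₀ + 1) ^ (2 * n)))
        ({z : ℂ | α < z.re} \ {z₀}) ∧
      Tendsto (fun z : ℂ => (z - z₀) * (1 / ((z - z₀) * (z - z₀ + 1) ^ (2 * n))))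
        (𝓝[≠] z₀) (𝓝 1) ∧
      (∀ z : ℂ, α < z.re → 20 < ‖z - z₀‖ →
        ‖1 / ((z - z₀) * (z - z₀ + 1) ^ (2 * n))‖ < C) := by
  obtain ⟨d, hd, hd1, hd18⟩ : ∃ d : ℝ, 0 < d ∧ d ≤ 1 - z₀.re ∧ d ≤ 18 :=
    ⟨min (1 - z₀.re) 18, lt_min (by linarith) (by norm_num), min_le_left _ _, min_le_right _ _⟩
  obtain ⟨N, hN⟩ := eventually_atTop.1 <|
    eventually_norm_inv_mul_pow_lt (𝕜 := ℂ) hd (lt_add_of_pos_right 1 hd) hC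
  have hbound : ∀ z, d ≤ ‖z - z₀‖ → 1 + d ≤ ‖z - z₀ + 1‖ →
      ‖1 / ((z - z₀) * (z - z₀ + 1) ^ (2 * N))‖ < C := fun z h h' => by
    simpa only [one_div] using hN (2 * N) (by omega) _ _ h h'
  refine ⟨N, fun z hz => hbound z ?_ ?_, ?_,
    tendsto_sub_mul_one_div_sub_mul_sub_add_one_pow z₀ _, fun z _ hz => hbound z ?_ ?_⟩
  · calc d ≤ (z - z₀).re := by rw [sub_re]; linarith
      _ ≤ ‖z - z₀‖ := re_le_norm _
  · calc 1 + d ≤ (z - z₀ + 1).re := by rw [add_re, sub_re, one_re]; linarith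
      _ ≤ ‖z - z₀ + 1‖ := re_le_norm _
  · refine (analyticOnNhd_one_div_sub_mul_sub_add_one_pow z₀ _).mono ?_
    rintro z ⟨hz : α < z.re, hne⟩
    simp only [mem_compl_iff, mem_insert_iff, not_or]
    refine ⟨hne, fun h => ?_⟩
    have : z.re = z₀.re - 1 := by rw [h, sub_re, one_re]
    linarith
  · linarith
  · have := norm_sub_norm_le (z - z₀) (-1)
    rw [sub_neg_eq_add, norm_neg, norm_one] at this
    linarith

/-- For `1/2 ≤ α < 1`, a point `z₀` with `α < Re z₀ < 1` and `C > 0`, there is `n ∈ ℕ` such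
that `g_{z₀}(z) = 1/((z − z₀)(z − z₀ + 1)^{2n})` satisfies: (i) `|g_{z₀}(z)| < C` for
`Re z > 1`; (ii) `g_{z₀}` is analytic on `{Re z > α} \ {z₀}` with a simple pole of residue `1`
at `z₀`; (iii) `|g_{z₀}(z)| < C` for `Re z > α`, `|z − z₀| > 20`. -/
theorem exists_pole_bump (α : ℝ) (hα : 1 / 2 ≤ α) (hα1 : α < 1)
    (z₀ : ℂ) (hz₀ : α < z₀.re) (hz₀' : z₀.re < 1) (C : ℝ) (hC : 0 < C) :
    ∃ n : ℕ,
      (∀ z : ℂ, 1 < z.re → ‖1 / ((z - z₀) * (z - z₀ + 1) ^ (2 * n))‖ < C) ∧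
      AnalyticOnNhd ℂ (fun z : ℂ => 1 / ((z - z₀) * (z - z₀ + 1) ^ (2 * n)))
        ({z : ℂ | α < z.re} \ {z₀}) ∧
      Tendsto (fun z : ℂ => (z - z₀) * (1 / ((z - z₀) * (z - z₀ + 1) ^ (2 * n))))
        (𝓝[≠] z₀) (𝓝 1) ∧
      (∀ z : ℂ, α < z.re → 20 < ‖z - z₀‖ →
        ‖1 / ((z - z₀) * (z - z₀ + 1) ^ (2 * n))‖ < C) :=
  exists_pole_bump_general α hα z₀ hz₀' C hC
end
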